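/- Fix α ≥ 1, 0 < k < l, p > 1, β = 1 + p(α−1), and let F, G be as in Serrin's construction: F(x) = x^α on [k,l], extended linearly for x > l, and G(x) = sign(x)(F(x̄)|F'(x̄)|^{p-1} − α^{p-1}k^β) with x̄ = |x| + k. Then G is differentiable at every x with |x| ≠ l − k, and G'(x) = (β/α)|F'(x̄)|^p if |x| < l − k, while G'(x) = |F'(x̄)|^p if |x| > l − k. -/

import Mathlib

/-!
`G` is the odd extension `sign x · g(|x|)` of the profile `g(t) = F(t+k)|F'(t+k)|^{p-1} - α^{p-1}k^β`,
which vanishes at `0`. An odd extension of a function vanishing at `0` is differentiable at `x`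
with derivative `g'(|x|)` as soon as `g` has the one-sided derivative `g'(|x|)` on `[0, ∞)`: at `0`
the two half-lines glue because the reflected branch `-g(-y)` has the same slope. On `[k, l]`
the identity `s^α (α s^{α-1})^{p-1} = α^{p-1} s^β` turns `g` into `α^{p-1}((t+k)^β - k^β)`, and
beyond `l` the function `F` is affine with slope `F'`, so `g' = F'·|F'|^{p-1} = |F'|^p`.
-/

open Set Filter Topology

section OddExtension

variable {h : ℝ → ℝ} {d x : ℝ}

theorem hasDerivWithinAt_sign_mul_abs_Ici (h0 : h 0 = 0) (hx : 0 ≤ x)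
    (hd : HasDerivWithinAt h d (Ici 0) x) :
    HasDerivWithinAt (fun y => Real.sign y * h |y|) d (Ici 0) x := by
  have hEq : ∀ y ∈ Ici (0 : ℝ), Real.sign y * h |y| = h y := by
    intro y (hy : 0 ≤ y)
    rcases hy.eq_or_lt with rfl | hy
    · simp [h0]
    · simp [Real.sign_of_pos hy, abs_of_pos hy]
  exact hd.congr_of_mem hEq hx

theorem hasDerivWithinAt_sign_mul_abs_Iic (h0 : h 0 = 0) (hx : x ≤ 0)
    (hd : HasDerivWithinAt h d (Ici 0) (-x)) :
    HasDerivWithinAt (fun y => Real.sign y * h |y|) d (Iic 0) x := by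
  have hEq : ∀ y ∈ Iic (0 : ℝ), Real.sign y * h |y| = -h (-y) := by
    intro y (hy : y ≤ 0)
    rcases hy.eq_or_lt with rfl | hy
    · simp [h0]
    · simp [Real.sign_of_neg hy, abs_of_neg hy]
  have hreflect : HasDerivWithinAt (fun y => -h (-y)) d (Iic 0) x := by
    have hneg : MapsTo (fun y : ℝ => -y) (Iic 0) (Ici 0) := fun y (hy : y ≤ 0) => neg_nonneg.mpr hy
    exact (hd.comp x (hasDerivAt_neg x).hasDerivWithinAt hneg).fun_neg.congr_deriv (by ring)
  exact hreflect.congr_of_mem hEq hx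

theorem HasDerivWithinAt.sign_mul_abs (h0 : h 0 = 0) (hd : HasDerivWithinAt h d (Ici 0) |x|) :
    HasDerivAt (fun y => Real.sign y * h |y|) d x := by
  rcases lt_trichotomy x 0 with hx | rfl | hx
  · rw [abs_of_neg hx] at hd
    exact (hasDerivWithinAt_sign_mul_abs_Iic h0 hx.le hd).hasDerivAt (Iic_mem_nhds hx)
  · rw [abs_zero] at hd
    have hglued := (hasDerivWithinAt_sign_mul_abs_Iic h0 le_rfl (by simpa using hd)).union
      (hasDerivWithinAt_sign_mul_abs_Ici h0 le_rfl hd)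
    rwa [Iic_union_Ici, hasDerivWithinAt_univ] at hglued
  · rw [abs_of_pos hx] at hd
    exact (hasDerivWithinAt_sign_mul_abs_Ici h0 hx.le hd).hasDerivAt (Ici_mem_nhds hx)

end OddExtension

section SerrinProfile

variable {α k l p β t : ℝ} {F F' : ℝ → ℝ}

theorem rpow_mul_abs_mul_rpow_sub_one_rpow (hα : 0 ≤ α) {s : ℝ} (hs : 0 < s) :
    s ^ α * |α * s ^ (α - 1)| ^ (p - 1) = α ^ (p - 1) * s ^ (1 + p * (α - 1)) := by
  rw [abs_of_nonneg (by positivity), Real.mul_rpow hα (by positivity), ← Real.rpow_mul hs.le]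
  have hexp : s ^ α * s ^ ((α - 1) * (p - 1)) = s ^ (1 + p * (α - 1)) := by
    rw [← Real.rpow_add hs]; ring_nf
  linear_combination α ^ (p - 1) * hexp

theorem div_mul_abs_mul_rpow_sub_one_rpow (c : ℝ) (hα : 0 < α) {s : ℝ} (hs : 0 < s) :
    c / α * |α * s ^ (α - 1)| ^ p = c * α ^ (p - 1) * s ^ (p * (α - 1)) := by
  rw [abs_of_nonneg (by positivity), Real.mul_rpow hα.le (by positivity), ← Real.rpow_mul hs.le,
    Real.rpow_sub_one hα.ne']
  field_simp

noncomputable def serrinProfile (F F' : ℝ → ℝ) (α k p β t : ℝ) : ℝ :=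
  F (t + k) * |F' (t + k)| ^ (p - 1) - α ^ (p - 1) * k ^ β

theorem serrinProfile_zero (hα : 0 ≤ α) (hk : 0 < k) (hkl : k ≤ l) (hβ : β = 1 + p * (α - 1))
    (hF : ∀ s ∈ Icc k l, F s = s ^ α) (hF' : ∀ s ∈ Icc k l, F' s = α * s ^ (α - 1)) :
    serrinProfile F F' α k p β 0 = 0 := by
  have hkmem : k ∈ Icc k l := ⟨le_rfl, hkl⟩
  rw [serrinProfile, zero_add, hF k hkmem, hF' k hkmem, rpow_mul_abs_mul_rpow_sub_one_rpow hα hk,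
    hβ, sub_self]

theorem hasDerivWithinAt_serrinProfile_of_lt (hα : 0 < α) (hk : 0 < k) (hβ : β = 1 + p * (α - 1))
    (hF : ∀ s ∈ Icc k l, F s = s ^ α) (hF' : ∀ s ∈ Icc k l, F' s = α * s ^ (α - 1))
    (ht0 : 0 ≤ t) (ht : t < l - k) :
    HasDerivWithinAt (serrinProfile F F' α k p β) (β / α * |F' (t + k)| ^ p) (Ici 0) t := by
  have hpower : ∀ s ∈ Ico 0 (l - k),
      serrinProfile F F' α k p β s = α ^ (p - 1) * (s + k) ^ β - α ^ (p - 1) * k ^ β := by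
    rintro s ⟨hs0, hsl⟩
    have hsmem : s + k ∈ Icc k l := ⟨by linarith, by linarith⟩
    rw [serrinProfile, hF _ hsmem, hF' _ hsmem,
      rpow_mul_abs_mul_rpow_sub_one_rpow hα.le (by linarith), hβ]
  have hmodel : HasDerivAt (fun s => α ^ (p - 1) * (s + k) ^ β - α ^ (p - 1) * k ^ β)
      (α ^ (p - 1) * (1 * β * (t + k) ^ (β - 1))) t :=
    ((((hasDerivAt_id' t).add_const k).rpow_const (Or.inl (by linarith))).const_mul _).sub_const _
  have htmem : t + k ∈ Icc k l := ⟨by linarith, by linarith⟩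
  have hslope : β / α * |F' (t + k)| ^ p = α ^ (p - 1) * (1 * β * (t + k) ^ (β - 1)) := by
    rw [hF' _ htmem, div_mul_abs_mul_rpow_sub_one_rpow β hα (by linarith), hβ]
    ring_nf
  rw [hslope]
  refine hmodel.hasDerivWithinAt.congr_of_eventuallyEq_of_mem ?_ (mem_Ici.mpr ht0)
  filter_upwards [self_mem_nhdsWithin, nhdsWithin_le_nhds (eventually_lt_nhds ht)] with s hs0 hsl
  exact hpower s ⟨hs0, hsl⟩

theorem hasDerivAt_serrinProfile_of_gt (hα : 0 < α) (hl : 0 < l)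
    (hF : ∀ s, l < s → F s = l ^ (α - 1) * (α * s - (α - 1) * l))
    (hF' : ∀ s, l < s → F' s = α * l ^ (α - 1)) (ht : l - k < t) :
    HasDerivAt (serrinProfile F F' α k p β) (|F' (t + k)| ^ p) t := by
  set c := α * l ^ (α - 1) with hc
  have hcpos : 0 < c := by positivity
  have haffine : ∀ s, l - k < s → serrinProfile F F' α k p β s =
      l ^ (α - 1) * (α * (s + k) - (α - 1) * l) * c ^ (p - 1) - α ^ (p - 1) * k ^ β := by
    intro s hs
    rw [serrinProfile, hF _ (by linarith), hF' _ (by linarith), abs_of_pos hcpos]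
  have hmodel : HasDerivAt
      (fun s => l ^ (α - 1) * (α * (s + k) - (α - 1) * l) * c ^ (p - 1) - α ^ (p - 1) * k ^ β)
      (l ^ (α - 1) * (α * 1) * c ^ (p - 1)) t :=
    (((((hasDerivAt_id' t).add_const k).const_mul α).sub_const _).const_mul _).mul_const _
      |>.sub_const _
  have hslope : |F' (t + k)| ^ p = l ^ (α - 1) * (α * 1) * c ^ (p - 1) := by
    rw [hF' _ (by linarith), abs_of_pos hcpos, ← sub_add_cancel p 1,
      Real.rpow_add_one hcpos.ne', add_sub_cancel_right, hc]
    ring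
  rw [hslope]
  refine hmodel.congr_of_eventuallyEq ?_
  filter_upwards [eventually_gt_nhds ht] with s hs
  exact haffine s hs

end SerrinProfile

theorem serrin_G_deriv_general (α k l p β : ℝ) (hα : 1 ≤ α) (hk : 0 < k) (hkl : k < l)
    (hβ : β = 1 + p * (α - 1))
    (F F' G : ℝ → ℝ)
    (hF : ∀ x, k ≤ x → F x = if x ≤ l then x ^ α else l ^ (α - 1) * (α * x - (α - 1) * l))
    (hF' : ∀ x, k ≤ x → F' x = if x ≤ l then α * x ^ (α - 1) else α * l ^ (α - 1))
    (hG : ∀ x : ℝ, G x = Real.sign x *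
      (F (|x| + k) * |F' (|x| + k)| ^ (p - 1) - α ^ (p - 1) * k ^ β)) :
    ∀ x : ℝ, (|x| < l - k → HasDerivAt G ((β / α) * |F' (|x| + k)| ^ p) x) ∧
      (l - k < |x| → HasDerivAt G (|F' (|x| + k)| ^ p) x) := by
  have hα0 : 0 < α := by linarith
  have hFin : ∀ s ∈ Icc k l, F s = s ^ α := fun s hs => by rw [hF s hs.1, if_pos hs.2]
  have hF'in : ∀ s ∈ Icc k l, F' s = α * s ^ (α - 1) := fun s hs => by
    rw [hF' s hs.1, if_pos hs.2]
  have hFout : ∀ s, l < s → F s = l ^ (α - 1) * (α * s - (α - 1) * l) := fun s hs => by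
    rw [hF s (by linarith), if_neg hs.not_ge]
  have hF'out : ∀ s, l < s → F' s = α * l ^ (α - 1) := fun s hs => by
    rw [hF' s (by linarith), if_neg hs.not_ge]
  have h0 := serrinProfile_zero (p := p) hα0.le hk hkl.le hβ hFin hF'in
  obtain rfl : G = fun y => Real.sign y * serrinProfile F F' α k p β |y| := funext hG
  intro x
  exact ⟨fun hx => (hasDerivWithinAt_serrinProfile_of_lt hα0 hk hβ hFin hF'in
      (abs_nonneg x) hx).sign_mul_abs h0,
    fun hx => (hasDerivAt_serrinProfile_of_gt hα0 (hk.trans hkl) hFout hF'out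
      hx).hasDerivWithinAt.sign_mul_abs h0⟩

/-- Serrin's auxiliary function `G` is differentiable away from `|x| = l - k`, with
`G' = (β/α)|F'(x̄)|^p` for `|x| < l - k` and `G' = |F'(x̄)|^p` for `|x| > l - k`. -/
theorem serrin_G_deriv (α k l p β : ℝ) (hα : 1 ≤ α) (hk : 0 < k) (hkl : k < l)
    (hp : 1 < p) (hβ : β = 1 + p * (α - 1))
    (F F' G : ℝ → ℝ)
    (hF : ∀ x, k ≤ x → F x = if x ≤ l then x ^ α else l ^ (α - 1) * (α * x - (α - 1) * l))
    (hF' : ∀ x, k ≤ x → F' x = if x ≤ l then α * x ^ (α - 1) else α * l ^ (α - 1))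
    (hG : ∀ x : ℝ, G x = Real.sign x *
      (F (|x| + k) * |F' (|x| + k)| ^ (p - 1) - α ^ (p - 1) * k ^ β)) :
    ∀ x : ℝ, (|x| < l - k → HasDerivAt G ((β / α) * |F' (|x| + k)| ^ p) x) ∧
      (l - k < |x| → HasDerivAt G (|F' (|x| + k)| ^ p) x) :=
  serrin_G_deriv_general α k l p β hα hk hkl hβ F F' G hF hF' hG
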